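/- Let K ⊆ ℝ^n be a compact convex body and let φ : int(K) → ℝ be a continuous convex function. For u > 0 set F(u) = ∫_K e^{−φ(x)/u} dx. Then for every σ > 0 and every 0 ≤ r < 1: F(σ²/(1+r)) · F(σ²/(1−r)) ≤ (1 − r²)^{−n} · F(σ²)². -/

import Mathlib

/-!
Write `a = 1/u`. Substituting `y = a • x` gives `aⁿ ∫_K e^{-aφ} = ∫_{a • K} e^{-a φ(y/a)} dy`, and
the perspective `(a, y) ↦ a φ(y/a)` of `φ` is jointly convex, so the integrands for `a₁`, `a₂` and
`(a₁ + a₂)/2` satisfy the hypothesis of the midpoint Prékopa–Leindler inequality. Hence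
`a ↦ aⁿ F(1/a)` is midpoint log-concave; take `a = (1 ± r)/σ²`.
On `ℝ`, Prékopa–Leindler follows from the Brunn–Minkowski inequality `|A| + |B| ≤ |A + B|` for
superlevel sets and the layer-cake formula, once `f` and `g` are rescaled to a common supremum;
Fubini extends it to `ℝⁿ`.
-/

open Set MeasureTheory

/-- `F(u) = ∫_K e^{-φ(x)/u} dx` (the boundary of the convex body has measure zero,
so we integrate over the interior, where `φ` is defined). -/
noncomputable def barF (n : ℕ) (K : Set (Fin n → ℝ)) (φ : (Fin n → ℝ) → ℝ)
    (u : ℝ) : ℝ :=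
  ∫ x in interior K, Real.exp (-φ x / u)

open ENNReal NNReal Pointwise

theorem ENNReal.four_mul_le_sq_add (a b : ℝ≥0∞) : 4 * a * b ≤ (a + b) ^ 2 := by
  rcases eq_or_ne a ∞ with rfl | ha
  · simp
  rcases eq_or_ne b ∞ with rfl | hb
  · simp
  lift a to ℝ≥0 using ha
  lift b to ℝ≥0 using hb
  exact_mod_cast _root_.four_mul_le_sq_add a b

theorem ENNReal.toReal_mul_toReal_le_sq {x y z : ℝ≥0∞} (h : x * y ≤ z ^ 2)
    (hz : x ≠ ∞ → y ≠ ∞ → z ≠ ∞) : x.toReal * y.toReal ≤ z.toReal ^ 2 := by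
  rcases eq_or_ne x ∞ with rfl | hx
  · simp
  rcases eq_or_ne y ∞ with rfl | hy
  · simp
  simpa [toReal_mul, toReal_pow] using toReal_mono (pow_ne_top (hz hx hy)) h

theorem lintegral_eq_iSup_lintegral_min_natCast {α : Type*} [MeasurableSpace α]
    {μ : Measure α} {f : α → ℝ≥0∞} (hf : Measurable f) :
    ∫⁻ x, f x ∂μ = ⨆ N : ℕ, ∫⁻ x, min (f x) N ∂μ := by
  rw [← lintegral_iSup (fun N => hf.min measurable_const)
    fun N M hNM x => min_le_min_left _ (by exact_mod_cast hNM)]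
  congr with x
  rw [← inf_iSup_eq, iSup_natCast, inf_top_eq]

theorem lintegral_eq_lintegral_meas_ofReal_lt {α : Type*} [MeasurableSpace α] (μ : Measure α)
    {f : α → ℝ≥0∞} (hf : Measurable f) (hf_top : ∀ x, f x ≠ ∞) :
    ∫⁻ x, f x ∂μ = ∫⁻ t in Ioi 0, μ {x | ENNReal.ofReal t < f x} := by
  calc ∫⁻ x, f x ∂μ = ∫⁻ x, ENNReal.ofReal (f x).toReal ∂μ := by simp [ofReal_toReal, hf_top]
    _ = ∫⁻ t in Ioi 0, μ {x | t < (f x).toReal} :=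
        lintegral_eq_lintegral_meas_lt μ (.of_forall fun _ => toReal_nonneg)
          hf.ennreal_toReal.aemeasurable
    _ = ∫⁻ t in Ioi 0, μ {x | ENNReal.ofReal t < f x} := by
        refine setLIntegral_congr_fun measurableSet_Ioi fun t ht => ?_
        simp_rw [ofReal_lt_iff_lt_toReal (le_of_lt ht) (hf_top _)]

theorem Real.volume_add_volume_le_volume_add_of_isCompact {K L : Set ℝ} (hK : IsCompact K)
    (hL : IsCompact L) (hK₀ : K.Nonempty) (hL₀ : L.Nonempty) :
    volume K + volume L ≤ volume (K + L) := by
  set k := sSup K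
  set l := sInf L
  have hkK : k ∈ K := hK.sSup_mem hK₀
  have hlL : l ∈ L := hL.sInf_mem hL₀
  -- `K + L` contains the translates `K + l` and `k + L`, which overlap only at `k + l`
  have hinter : (· + l) '' K ∩ (k + ·) '' L ⊆ {k + l} := by
    rintro _ ⟨⟨x, hx, rfl⟩, ⟨y, hy, hxy⟩⟩
    have := le_csSup hK.bddAbove hx
    have := csInf_le hL.bddBelow hy
    simp only [mem_singleton_iff]
    linarith
  calc volume K + volume L = volume ((· + l) '' K) + volume ((k + ·) '' L) := by simp
    _ = volume ((· + l) '' K ∪ (k + ·) '' L) :=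
        (measure_union₀ (hL.image (continuous_const_add k)).measurableSet.nullMeasurableSet
          (measure_mono_null hinter (measure_singleton _))).symm
    _ ≤ volume (K + L) := by
        rw [← add_singleton, ← singleton_add]
        exact measure_mono <| union_subset (add_subset_add_left (singleton_subset_iff.2 hlL))
          (add_subset_add_right (singleton_subset_iff.2 hkK))

theorem Real.volume_add_volume_le_volume_add {A B : Set ℝ} (hA : MeasurableSet A)
    (hB : MeasurableSet B) (hA₀ : A.Nonempty) (hB₀ : B.Nonempty) :
    volume A + volume B ≤ volume (A + B) := by
  obtain ⟨a, ha⟩ := hA₀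
  obtain ⟨b, hb⟩ := hB₀
  rw [hA.measure_eq_iSup_isCompact, hB.measure_eq_iSup_isCompact]
  simp only [iSup_and']
  refine ENNReal.biSup_add_biSup_le' ⟨∅, empty_subset _, isCompact_empty⟩
    ⟨∅, empty_subset _, isCompact_empty⟩ fun K ⟨hKA, hK⟩ L ⟨hLB, hL⟩ => ?_
  calc volume K + volume L ≤ volume (insert a K) + volume (insert b L) := by
        gcongr <;> exact subset_insert _ _
    _ ≤ volume (insert a K + insert b L) :=
        volume_add_volume_le_volume_add_of_isCompact (hK.insert a) (hL.insert b)
          (insert_nonempty _ _) (insert_nonempty _ _)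
    _ ≤ volume (A + B) :=
        measure_mono (add_subset_add (insert_subset ha hKA) (insert_subset hb hLB))

theorem volume_lt_add_volume_lt_le_two_mul {f g h : ℝ → ℝ≥0∞} (hf : Measurable f)
    (hg : Measurable g) (hfgh : ∀ x y, f x * g y ≤ h ((2 : ℝ)⁻¹ • (x + y)) ^ 2) {t : ℝ≥0∞}
    (hft : {x | t < f x}.Nonempty) (hgt : {x | t < g x}.Nonempty) :
    volume {x | t < f x} + volume {x | t < g x} ≤ 2 * volume {x | t < h x} := by
  have hsub : {x | t < f x} + {x | t < g x} ⊆ (2 : ℝ) • {x | t < h x} := by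
    rintro _ ⟨x, hx, y, hy, rfl⟩
    rw [mem_smul_set_iff_inv_smul_mem₀ two_ne_zero]
    show t < h _
    refine lt_of_not_ge fun hle => (ENNReal.mul_lt_mul hx hy).not_ge ?_
    exact (hfgh x y).trans (sq (h _) ▸ mul_le_mul' hle hle)
  calc volume {x | t < f x} + volume {x | t < g x}
      ≤ volume ({x | t < f x} + {x | t < g x}) :=
        Real.volume_add_volume_le_volume_add (hf measurableSet_Ioi) (hg measurableSet_Ioi) hft hgt
    _ ≤ volume ((2 : ℝ) • {x | t < h x}) := measure_mono hsub
    _ = 2 * volume {x | t < h x} := by simp [Measure.addHaar_smul]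

theorem lintegral_add_lintegral_le_of_iSup_eq {f g h : ℝ → ℝ≥0∞} (hf : Measurable f)
    (hg : Measurable g) (hh : Measurable h)
    (hfgh : ∀ x y, f x * g y ≤ h ((2 : ℝ)⁻¹ • (x + y)) ^ 2) {S : ℝ≥0∞} (hS : S ≠ ∞)
    (hfS : ⨆ x, f x = S) (hgS : ⨆ x, g x = S) :
    (∫⁻ x, f x) + ∫⁻ x, g x ≤ 2 * ∫⁻ x, h x := by
  have hf_le (x : ℝ) : f x ≤ S := hfS ▸ le_iSup f x
  have hg_le (x : ℝ) : g x ≤ S := hgS ▸ le_iSup g x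
  -- capping `h` at `S` makes it finite-valued, for the layer-cake formula, and changes no level
  -- below `S`
  have hlevel (t : ℝ) : volume {x | ENNReal.ofReal t < f x} + volume {x | ENNReal.ofReal t < g x}
      ≤ 2 * volume {x | ENNReal.ofReal t < min (h x) S} := by
    by_cases htS : ENNReal.ofReal t < S
    · have hmin : {x | ENNReal.ofReal t < min (h x) S} = {x | ENNReal.ofReal t < h x} := by
        simp [htS]
      obtain ⟨x, hx⟩ := lt_iSup_iff.mp (hfS ▸ htS)
      obtain ⟨y, hy⟩ := lt_iSup_iff.mp (hgS ▸ htS)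
      rw [hmin]
      exact volume_lt_add_volume_lt_le_two_mul hf hg hfgh ⟨x, hx⟩ ⟨y, hy⟩
    · have hf0 : {x | ENNReal.ofReal t < f x} = ∅ :=
        eq_empty_of_forall_notMem fun x hx => htS (lt_of_lt_of_le hx (hf_le x))
      have hg0 : {x | ENNReal.ofReal t < g x} = ∅ :=
        eq_empty_of_forall_notMem fun x hx => htS (lt_of_lt_of_le hx (hg_le x))
      simp [hf0, hg0]
  calc (∫⁻ x, f x) + ∫⁻ x, g x
      = (∫⁻ t in Ioi 0, volume {x | ENNReal.ofReal t < f x})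
          + ∫⁻ t in Ioi 0, volume {x | ENNReal.ofReal t < g x} := by
        rw [lintegral_eq_lintegral_meas_ofReal_lt _ hf fun x => ne_top_of_le_ne_top hS (hf_le x),
          lintegral_eq_lintegral_meas_ofReal_lt _ hg fun x => ne_top_of_le_ne_top hS (hg_le x)]
    _ ≤ ∫⁻ t in Ioi 0, 2 * volume {x | ENNReal.ofReal t < min (h x) S} :=
        (le_lintegral_add _ _).trans (lintegral_mono hlevel)
    _ = 2 * ∫⁻ x, min (h x) S := by
        rw [lintegral_const_mul' _ _ ofNat_ne_top, lintegral_eq_lintegral_meas_ofReal_lt _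
          (hh.min measurable_const) fun x => ne_top_of_le_ne_top hS (min_le_right _ _)]
    _ ≤ 2 * ∫⁻ x, h x := by gcongr; exact min_le_left _ _

theorem lintegral_mul_lintegral_le_sq_of_iSup_ne_top {f g h : ℝ → ℝ≥0∞} (hf : Measurable f)
    (hg : Measurable g) (hh : Measurable h)
    (hfgh : ∀ x y, f x * g y ≤ h ((2 : ℝ)⁻¹ • (x + y)) ^ 2) (hf_top : ⨆ x, f x ≠ ∞)
    (hg_top : ⨆ x, g x ≠ ∞) :
    (∫⁻ x, f x) * ∫⁻ x, g x ≤ (∫⁻ x, h x) ^ 2 := by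
  rcases eq_or_ne (⨆ x, f x) 0 with hf0 | hf0
  · simp [ENNReal.iSup_eq_zero.mp hf0]
  rcases eq_or_ne (⨆ x, g x) 0 with hg0 | hg0
  · simp [ENNReal.iSup_eq_zero.mp hg0]
  lift ⨆ x, f x to ℝ≥0 using hf_top with Sf hSf
  lift ⨆ x, g x to ℝ≥0 using hg_top with Sg hSg
  set k : ℝ≥0 := NNReal.sqrt (Sf * Sg)
  have hk : (k : ℝ≥0∞) ^ 2 = Sf * Sg := by
    rw [← ENNReal.coe_pow, NNReal.sq_sqrt, coe_mul]
  -- rescale `f` and `g` so that both have supremum `Sf * Sg`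
  have hsum : Sg * (∫⁻ x, f x) + Sf * ∫⁻ x, g x ≤ 2 * (k * ∫⁻ x, h x) := by
    rw [← lintegral_const_mul _ hf, ← lintegral_const_mul _ hg, ← lintegral_const_mul _ hh]
    refine lintegral_add_lintegral_le_of_iSup_eq (hf.const_mul _) (hg.const_mul _)
      (hh.const_mul _) (fun x y => ?_) (S := Sf * Sg) (mul_ne_top coe_ne_top coe_ne_top) ?_ ?_
    · calc Sg * f x * (Sf * g y) = (Sf * Sg) * (f x * g y) := by ring
        _ ≤ k ^ 2 * h ((2 : ℝ)⁻¹ • (x + y)) ^ 2 := by rw [hk]; gcongr; exact hfgh x y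
        _ = (k * h ((2 : ℝ)⁻¹ • (x + y))) ^ 2 := by ring
    · rw [← ENNReal.mul_iSup, ← hSf, mul_comm]
    · rw [← ENNReal.mul_iSup, ← hSg]
  have hSfg₀ : ((Sf * Sg : ℝ≥0) : ℝ≥0∞) ≠ 0 := by simp_all
  refine (ENNReal.mul_le_mul_iff_right (mul_ne_zero hSfg₀ four_ne_zero)
    (mul_ne_top coe_ne_top ofNat_ne_top)).mp ?_
  calc (Sf * Sg : ℝ≥0) * 4 * ((∫⁻ x, f x) * ∫⁻ x, g x)
      = 4 * (Sg * ∫⁻ x, f x) * (Sf * ∫⁻ x, g x) := by push_cast; ring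
    _ ≤ (Sg * (∫⁻ x, f x) + Sf * ∫⁻ x, g x) ^ 2 := ENNReal.four_mul_le_sq_add _ _
    _ ≤ (2 * (k * ∫⁻ x, h x)) ^ 2 := by gcongr
    _ = (Sf * Sg : ℝ≥0) * 4 * (∫⁻ x, h x) ^ 2 := by push_cast; rw [mul_pow, mul_pow, hk]; ring

def IsPrekopaLeindler {E : Type*} [MeasurableSpace E] [AddCommMonoid E] [SMul ℝ E]
    (μ : Measure E) : Prop :=
  ∀ f g h : E → ℝ≥0∞, Measurable f → Measurable g → Measurable h →
    (∀ x y, f x * g y ≤ h ((2 : ℝ)⁻¹ • (x + y)) ^ 2) →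
    (∫⁻ x, f x ∂μ) * (∫⁻ x, g x ∂μ) ≤ (∫⁻ x, h x ∂μ) ^ 2

theorem isPrekopaLeindler_volume_real : IsPrekopaLeindler (volume : Measure ℝ) := by
  intro f g h hf hg hh hfgh
  rw [lintegral_eq_iSup_lintegral_min_natCast hf, lintegral_eq_iSup_lintegral_min_natCast hg,
    ENNReal.iSup_mul]
  refine iSup_le fun N => ?_
  rw [ENNReal.mul_iSup]
  refine iSup_le fun M => lintegral_mul_lintegral_le_sq_of_iSup_ne_top
    (hf.min measurable_const) (hg.min measurable_const) hh
    (fun x y => (mul_le_mul' (min_le_left _ _) (min_le_left _ _)).trans (hfgh x y)) ?_ ?_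
  · exact ne_top_of_le_ne_top (natCast_ne_top N) (iSup_le fun _ => min_le_right _ _)
  · exact ne_top_of_le_ne_top (natCast_ne_top M) (iSup_le fun _ => min_le_right _ _)

namespace IsPrekopaLeindler

variable {E F : Type*} [MeasurableSpace E] [AddCommMonoid E] [SMul ℝ E]
  [MeasurableSpace F] [AddCommMonoid F] [SMul ℝ F] {μ : Measure E} {ν : Measure F}

theorem prod [SFinite μ] [SFinite ν] (hμ : IsPrekopaLeindler μ) (hν : IsPrekopaLeindler ν) :
    IsPrekopaLeindler (μ.prod ν) := by
  intro f g h hf hg hh hfgh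
  rw [lintegral_prod _ hf.aemeasurable, lintegral_prod _ hg.aemeasurable,
    lintegral_prod _ hh.aemeasurable]
  refine hμ _ _ _ hf.lintegral_prod_right' hg.lintegral_prod_right' hh.lintegral_prod_right'
    fun x₁ y₁ => hν _ _ _ (hf.comp measurable_prodMk_left) (hg.comp measurable_prodMk_left)
      (hh.comp measurable_prodMk_left) fun x₂ y₂ => hfgh (x₁, x₂) (y₁, y₂)

theorem map {e : E → F} (he : MeasurePreserving e μ ν)
    (he_mid : ∀ x y, e ((2 : ℝ)⁻¹ • (x + y)) = (2 : ℝ)⁻¹ • (e x + e y))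
    (hμ : IsPrekopaLeindler μ) : IsPrekopaLeindler ν := by
  intro f g h hf hg hh hfgh
  rw [← he.lintegral_comp hf, ← he.lintegral_comp hg, ← he.lintegral_comp hh]
  exact hμ _ _ _ (hf.comp he.measurable) (hg.comp he.measurable) (hh.comp he.measurable)
    fun x y => he_mid x y ▸ hfgh (e x) (e y)

end IsPrekopaLeindler

theorem isPrekopaLeindler_volume_pi (n : ℕ) :
    IsPrekopaLeindler (volume : Measure (Fin n → ℝ)) := by
  induction n with
  | zero =>
    intro f g h _ _ _ hfgh
    rw [volume_pi, Measure.pi_of_empty]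
    simp only [lintegral_dirac]
    convert hfgh default default
  | succ n ih =>
    refine (isPrekopaLeindler_volume_real.prod ih).map
      (volume_preserving_piFinSuccAbove (fun _ => ℝ) 0).symm fun x y => ?_
    ext i
    refine Fin.cases ?_ (fun j => ?_) i <;> simp [mul_add]

section PartitionFunction

variable {α : Type*} [MeasurableSpace α] {μ : Measure α} {D : Set α} {φ : α → ℝ}

noncomputable def partitionFunction (μ : Measure α) (D : Set α) (φ : α → ℝ) (a : ℝ) : ℝ≥0∞ :=
  ∫⁻ x in D, ENNReal.ofReal (Real.exp (-(a * φ x))) ∂μ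

theorem partitionFunction_le_add (hφ : AEMeasurable φ (μ.restrict D)) {a a₁ a₂ : ℝ}
    (h₁ : a₁ ≤ a) (h₂ : a ≤ a₂) :
    partitionFunction μ D φ a ≤ partitionFunction μ D φ a₁ + partitionFunction μ D φ a₂ := by
  rw [partitionFunction, partitionFunction, partitionFunction,
    ← lintegral_add_left' (by fun_prop)]
  refine lintegral_mono fun x => ?_
  rw [← ofReal_add (Real.exp_nonneg _) (Real.exp_nonneg _)]
  refine ofReal_le_ofReal ?_
  rcases le_total 0 (φ x) with hφx | hφx
  · have : Real.exp (-(a * φ x)) ≤ Real.exp (-(a₁ * φ x)) := Real.exp_le_exp.2 (by nlinarith)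
    linarith [Real.exp_nonneg (-(a₂ * φ x))]
  · have : Real.exp (-(a * φ x)) ≤ Real.exp (-(a₂ * φ x)) := Real.exp_le_exp.2 (by nlinarith)
    linarith [Real.exp_nonneg (-(a₁ * φ x))]

end PartitionFunction

section Perspective

variable {E : Type*} [NormedAddCommGroup E] [NormedSpace ℝ E] {D : Set E} {φ : E → ℝ}

noncomputable def expPerspective (D : Set E) (φ : E → ℝ) (a : ℝ) : E → ℝ≥0∞ :=
  (a • D).indicator fun y => ENNReal.ofReal (Real.exp (-(a * φ (a⁻¹ • y))))

theorem expPerspective_mul_le (hφ : ConvexOn ℝ D φ) {a₁ a₂ : ℝ} (ha₁ : 0 < a₁) (ha₂ : 0 < a₂)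
    (x y : E) :
    expPerspective D φ a₁ x * expPerspective D φ a₂ y ≤
      expPerspective D φ ((a₁ + a₂) / 2) ((2 : ℝ)⁻¹ • (x + y)) ^ 2 := by
  by_cases hx : x ∈ a₁ • D
  swap; · simp [expPerspective, hx]
  by_cases hy : y ∈ a₂ • D
  swap; · simp [expPerspective, hy]
  obtain ⟨x, hxD, rfl⟩ := hx
  obtain ⟨y, hyD, rfl⟩ := hy
  have ha₀ : 0 < (a₁ + a₂) / 2 := by positivity
  set θ₁ := a₁ / (a₁ + a₂) with hθ₁_def
  set θ₂ := a₂ / (a₁ + a₂) with hθ₂_def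
  have h₁ : (a₁ + a₂) * θ₁ = a₁ := mul_div_cancel₀ _ (by positivity)
  have h₂ : (a₁ + a₂) * θ₂ = a₂ := mul_div_cancel₀ _ (by positivity)
  have hθ₁ : 0 ≤ θ₁ := by positivity
  have hθ₂ : 0 ≤ θ₂ := by positivity
  have hθ : θ₁ + θ₂ = 1 := by rw [hθ₁_def, hθ₂_def, ← add_div, div_self (by positivity)]
  have hzD : θ₁ • x + θ₂ • y ∈ D := hφ.1 hxD hyD hθ₁ hθ₂ hθ
  have hmid : (2 : ℝ)⁻¹ • (a₁ • x + a₂ • y) = ((a₁ + a₂) / 2) • (θ₁ • x + θ₂ • y) := by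
    simp only [smul_add, smul_smul]
    congr 2
    · linear_combination (-1 / 2 : ℝ) * h₁
    · linear_combination (-1 / 2 : ℝ) * h₂
  have hφz : (a₁ + a₂) * φ (θ₁ • x + θ₂ • y) ≤ a₁ * φ x + a₂ * φ y :=
    calc (a₁ + a₂) * φ (θ₁ • x + θ₂ • y) ≤ (a₁ + a₂) * (θ₁ * φ x + θ₂ * φ y) := by
          gcongr; exact hφ.2 hxD hyD hθ₁ hθ₂ hθ
      _ = a₁ * φ x + a₂ * φ y := by rw [mul_add, ← mul_assoc, ← mul_assoc, h₁, h₂]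
  rw [hmid]
  simp only [expPerspective, indicator_of_mem (smul_mem_smul_set hxD),
    indicator_of_mem (smul_mem_smul_set hyD), indicator_of_mem (smul_mem_smul_set hzD),
    inv_smul_smul₀ ha₁.ne', inv_smul_smul₀ ha₂.ne', inv_smul_smul₀ ha₀.ne']
  rw [← ofReal_mul (Real.exp_nonneg _), ← ofReal_pow (Real.exp_nonneg _), ← Real.exp_add,
    ← Real.exp_nat_mul]
  gcongr
  push_cast
  linarith

variable [MeasurableSpace E] [BorelSpace E]

theorem measurable_expPerspective (hD : IsOpen D) (hφ : ContinuousOn φ D) {a : ℝ} (ha : a ≠ 0) :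
    Measurable (expPerspective D φ a) := by
  classical
  rw [expPerspective, ← piecewise_eq_indicator]
  refine ContinuousOn.measurable_piecewise ?_ continuousOn_const (hD.smul₀ ha).measurableSet
  refine (ENNReal.continuous_ofReal.comp Real.continuous_exp).comp_continuousOn
    ((continuousOn_const.mul (hφ.comp (continuous_const_smul _).continuousOn ?_)).neg)
  intro y hy
  exact (mem_smul_set_iff_inv_smul_mem₀ ha _ _).mp hy

theorem lintegral_expPerspective [FiniteDimensional ℝ E] (μ : Measure E) [μ.IsAddHaarMeasure]
    (hD : MeasurableSet D) {a : ℝ} (ha : 0 < a) :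
    ∫⁻ y, expPerspective D φ a y ∂μ =
      ENNReal.ofReal (a ^ Module.finrank ℝ E) * partitionFunction μ D φ a := by
  have hcomp : (fun x => expPerspective D φ a (a • x)) =
      D.indicator fun x => ENNReal.ofReal (Real.exp (-(a * φ x))) := by
    ext x
    by_cases hx : x ∈ D <;>
      simp [expPerspective, hx, smul_mem_smul_set_iff₀ ha.ne', inv_smul_smul₀ ha.ne']
  have h := lintegral_map_equiv (μ := μ) (expPerspective D φ a) (MeasurableEquiv.smul₀ a ha.ne')
  rw [MeasurableEquiv.coe_smul₀] at h
  rw [Measure.map_addHaar_smul μ ha.ne', lintegral_smul_measure, hcomp, lintegral_indicator hD,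
    abs_of_pos (by positivity)] at h
  rw [partitionFunction, ← h, smul_eq_mul, ← mul_assoc, ← ofReal_mul (by positivity),
    mul_inv_cancel₀ (by positivity), ofReal_one, one_mul]

end Perspective

section Euclidean

variable {n : ℕ} {D : Set (Fin n → ℝ)} {φ : (Fin n → ℝ) → ℝ} {a₁ a₂ : ℝ}

theorem ofReal_pow_mul_partitionFunction_mul_le_sq (hD : IsOpen D) (hφ : ConvexOn ℝ D φ)
    (ha₁ : 0 < a₁) (ha₂ : 0 < a₂) :
    ENNReal.ofReal (a₁ ^ n) * partitionFunction volume D φ a₁ *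
        (ENNReal.ofReal (a₂ ^ n) * partitionFunction volume D φ a₂) ≤
      (ENNReal.ofReal (((a₁ + a₂) / 2) ^ n) *
        partitionFunction volume D φ ((a₁ + a₂) / 2)) ^ 2 := by
  have hcont := hφ.continuousOn hD
  have ha₀ : 0 < (a₁ + a₂) / 2 := by positivity
  simpa only [lintegral_expPerspective volume hD.measurableSet, ha₁, ha₂, ha₀,
    Module.finrank_fin_fun] using
    isPrekopaLeindler_volume_pi n _ _ _ (measurable_expPerspective hD hcont ha₁.ne')
      (measurable_expPerspective hD hcont ha₂.ne') (measurable_expPerspective hD hcont ha₀.ne')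
      (expPerspective_mul_le hφ ha₁ ha₂)

theorem pow_mul_toReal_partitionFunction_mul_le_sq (hD : IsOpen D) (hφ : ConvexOn ℝ D φ)
    (ha₁ : 0 < a₁) (ha₂ : 0 < a₂) :
    (a₁ * a₂) ^ n * ((partitionFunction volume D φ a₁).toReal *
        (partitionFunction volume D φ a₂).toReal) ≤
      ((a₁ + a₂) / 2) ^ (2 * n) * (partitionFunction volume D φ ((a₁ + a₂) / 2)).toReal ^ 2 := by
  have hmeas := (hφ.continuousOn hD).aemeasurable (μ := volume) hD.measurableSet
  have hle : partitionFunction volume D φ ((a₁ + a₂) / 2) ≤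
      partitionFunction volume D φ a₁ + partitionFunction volume D φ a₂ := by
    rcases le_total a₁ a₂ with h | h
    · exact partitionFunction_le_add hmeas (by linarith) (by linarith)
    · exact add_comm (partitionFunction volume D φ a₁) _ ▸
        partitionFunction_le_add hmeas (by linarith) (by linarith)
  have key := ENNReal.toReal_mul_toReal_le_sq
    (ofReal_pow_mul_partitionFunction_mul_le_sq hD hφ ha₁ ha₂) fun h₁ h₂ => ?_
  · simp only [toReal_mul, toReal_ofReal (pow_nonneg ha₁.le n), toReal_ofReal (pow_nonneg ha₂.le n),
      toReal_ofReal (pow_nonneg (by positivity : 0 ≤ (a₁ + a₂) / 2) n)] at key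
    linear_combination key
  · have hZ (a : ℝ) (ha : 0 < a) (h : ENNReal.ofReal (a ^ n) * partitionFunction volume D φ a ≠ ∞) :
        partitionFunction volume D φ a ≠ ∞ := fun hZ => h <| by
      rw [hZ, mul_top (ofReal_pos.2 (pow_pos ha n)).ne']
    exact mul_ne_top ofReal_ne_top
      (ne_top_of_le_ne_top (add_ne_top.2 ⟨hZ a₁ ha₁ h₁, hZ a₂ ha₂ h₂⟩) hle)

end Euclidean

theorem barF_eq_toReal_partitionFunction {n : ℕ} {K : Set (Fin n → ℝ)} {φ : (Fin n → ℝ) → ℝ}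
    (hφ : AEMeasurable φ (volume.restrict (interior K))) (u : ℝ) :
    barF n K φ u = (partitionFunction volume (interior K) φ u⁻¹).toReal := by
  rw [barF, partitionFunction, ← integral_eq_lintegral_of_nonneg_ae
    (.of_forall fun _ => Real.exp_nonneg _) (by fun_prop)]
  simp_rw [neg_div, div_eq_inv_mul]

theorem F_logconcavity_bound_general
    (n : ℕ) (K : Set (Fin n → ℝ))
    (φ : (Fin n → ℝ) → ℝ)
    (hφconv : ConvexOn ℝ (interior K) φ)
    (σ r : ℝ) (hσ : 0 < σ) (hr0 : 0 ≤ r) (hr1 : r < 1) :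
    barF n K φ (σ ^ 2 / (1 + r)) * barF n K φ (σ ^ 2 / (1 - r)) ≤
      (1 - r ^ 2) ^ (-(n : ℝ)) * (barF n K φ (σ ^ 2)) ^ 2 := by
  have hφ := (hφconv.continuousOn isOpen_interior).aemeasurable (μ := volume)
    isOpen_interior.measurableSet
  have hσ2 : 0 < σ ^ 2 := by positivity
  have hr2 : 0 < 1 - r ^ 2 := by nlinarith
  have key := pow_mul_toReal_partitionFunction_mul_le_sq isOpen_interior hφconv
    (div_pos (by linarith : 0 < 1 + r) hσ2) (div_pos (by linarith : 0 < 1 - r) hσ2)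
  have hmid : ((1 + r) / σ ^ 2 + (1 - r) / σ ^ 2) / 2 = (σ ^ 2)⁻¹ := by field_simp; ring
  have hprod : (1 + r) / σ ^ 2 * ((1 - r) / σ ^ 2) = (1 - r ^ 2) * ((σ ^ 2)⁻¹) ^ 2 := by
    field_simp; ring
  rw [hmid, hprod, mul_pow, ← pow_mul] at key
  simp only [barF_eq_toReal_partitionFunction hφ, inv_div]
  rw [Real.rpow_neg hr2.le, Real.rpow_natCast, ← div_eq_inv_mul, le_div_iff₀ (by positivity)]
  refine le_of_mul_le_mul_left ?_ (by positivity : 0 < ((σ ^ 2)⁻¹) ^ (2 * n))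
  linear_combination key

/-- logconcavity bound
`F(σ²/(1+r)) F(σ²/(1−r)) ≤ (1 − r²)^{−n} F(σ²)²`. -/
theorem F_logconcavity_bound
    (n : ℕ) (K : Set (Fin n → ℝ)) (hK : IsCompact K) (hKc : Convex ℝ K)
    (hKint : (interior K).Nonempty)
    (φ : (Fin n → ℝ) → ℝ)
    (hφcont : ContinuousOn φ (interior K))
    (hφconv : ConvexOn ℝ (interior K) φ)
    (σ r : ℝ) (hσ : 0 < σ) (hr0 : 0 ≤ r) (hr1 : r < 1) :
    barF n K φ (σ ^ 2 / (1 + r)) * barF n K φ (σ ^ 2 / (1 - r)) ≤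
      (1 - r ^ 2) ^ (-(n : ℝ)) * (barF n K φ (σ ^ 2)) ^ 2 :=
  F_logconcavity_bound_general n K φ hφconv σ r hσ hr0 hr1
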